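/- arXiv:1707.06304 — 2 statements merged into one kernel-verified Lean document; each statement's English description precedes it below -/
import Mathlib

section
/- For a Type B connection with C₂₂² = −C₁₂¹ (so that ρ is symmetric), the covariant derivative ∇ρ is totally symmetric if and only if both C₁₁¹C₁₂¹ + 3C₁₁²C₂₂¹ − 2C₁₂¹C₁₂² + 2C₁₂¹ = 0 and 2C₁₁¹C₂₂¹ − 6(C₁₂¹)² − 4C₁₂²C₂₂¹ − 2C₂₂¹ = 0. -/
/-!
Every Christoffel symbol C/x¹ is homogeneous of degree −1 in x¹ and independent of x², so
ρ = R/(x¹)² and ∇ρ = N/(x¹)³ for constant tensors R and N, polynomial in C. The relation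
C₂₂² = −C₁₂¹ is exactly the symmetry of R, which makes N symmetric in its first two indices.
Total symmetry then comes down to N₁₂₁ = N₁₁₂ and N₂₁₂ = N₂₂₁, and the differences of these
components are the two displayed polynomials (the indices 1, 2 are `0`, `1 : Fin 2` here).
-/

open Real

/-- Partial derivative ∂_i on ℝ². -/
noncomputable def pd (i : Fin 2) (f : ℝ × ℝ → ℝ) : ℝ × ℝ → ℝ :=
  fun p => if i = 0 then deriv (fun t => f (t, p.2)) p.1
           else deriv (fun t => f (p.1, t)) p.2

/-- Affine Hessian H(f)_{ij} = ∂_i∂_j f − Σ_k Γ_{ij}^k ∂_k f. -/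
noncomputable def Hess (Γ : Fin 2 → Fin 2 → Fin 2 → (ℝ × ℝ → ℝ))
    (f : ℝ × ℝ → ℝ) (i j : Fin 2) : ℝ × ℝ → ℝ :=
  fun p => pd i (pd j f) p - ∑ k, Γ i j k p * pd k f p

/-- Ricci tensor ρ_{jk} = ∂_i Γ_{jk}^i − ∂_j Γ_{ik}^i + Γ_{il}^i Γ_{jk}^l − Γ_{jl}^i Γ_{ik}^l. -/
noncomputable def Ric (Γ : Fin 2 → Fin 2 → Fin 2 → (ℝ × ℝ → ℝ)) (j k : Fin 2) :
    ℝ × ℝ → ℝ :=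
  fun p => (∑ i, pd i (Γ j k i) p) - (∑ i, pd j (Γ i k i) p)
    + (∑ i, ∑ l, Γ i l i p * Γ j k l p) - (∑ i, ∑ l, Γ j l i p * Γ i k l p)

/-- Symmetrized Ricci tensor. -/
noncomputable def RicS (Γ : Fin 2 → Fin 2 → Fin 2 → (ℝ × ℝ → ℝ)) (i j : Fin 2) :
    ℝ × ℝ → ℝ :=
  fun p => (Ric Γ i j p + Ric Γ j i p) / 2

/-- Covariant derivative of the Ricci tensor: (∇ρ)(i,j;k). -/
noncomputable def nabRic (Γ : Fin 2 → Fin 2 → Fin 2 → (ℝ × ℝ → ℝ)) (i j k : Fin 2) :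
    ℝ × ℝ → ℝ :=
  fun p => pd k (Ric Γ i j) p - ∑ l, Γ k i l p * Ric Γ l j p
    - ∑ l, Γ k j l p * Ric Γ i l p

/-- Type B Christoffel symbols Γ_{ij}^k = C_{ij}^k / x¹. -/
noncomputable def ΓB (C : Fin 2 → Fin 2 → Fin 2 → ℝ) :
    Fin 2 → Fin 2 → Fin 2 → (ℝ × ℝ → ℝ) :=
  fun i j k p => C i j k / p.1

noncomputable def typeBRic (C : Fin 2 → Fin 2 → Fin 2 → ℝ) (j k : Fin 2) : ℝ :=
  -C j k 0 + (if j = 0 then ∑ i, C i k i else 0)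
    + ∑ i, ∑ l, (C i l i * C j k l - C j l i * C i k l)

noncomputable def typeBNabRic (C : Fin 2 → Fin 2 → Fin 2 → ℝ) (i j k : Fin 2) : ℝ :=
  (if k = 0 then -2 * typeBRic C i j else 0)
    - ∑ l, C k i l * typeBRic C l j - ∑ l, C k j l * typeBRic C i l

lemma pd_congr_of_eqOn {f g : ℝ × ℝ → ℝ} (h : Set.EqOn f g {q | q.1 ≠ 0})
    {p : ℝ × ℝ} (hp : p.1 ≠ 0) (i : Fin 2) : pd i f p = pd i g p := by
  unfold pd
  split_ifs
  · apply Filter.EventuallyEq.deriv_eq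
    filter_upwards [eventually_ne_nhds hp] with t ht
    exact h ht
  · congr 1
    funext t
    exact h hp

lemma pd_const_div_fst_pow {p : ℝ × ℝ} (hp : p.1 ≠ 0) (c : ℝ) (n : ℕ) (i : Fin 2) :
    pd i (fun q => c / q.1 ^ n) p = if i = 0 then -(n * c) / p.1 ^ (n + 1) else 0 := by
  unfold pd
  split_ifs
  · have h := (hasDerivAt_const p.1 c).div (hasDerivAt_pow n p.1) (pow_ne_zero n hp)
    change deriv ((fun _ => c) / fun t : ℝ => t ^ n) p.1 = _
    rw [h.deriv]
    rcases n with _ | n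
    · simp
    · rw [Nat.add_sub_cancel]
      field_simp
      ring
  · exact deriv_const _ (c / p.1 ^ n)

lemma pd_const_div_fst {p : ℝ × ℝ} (hp : p.1 ≠ 0) (c : ℝ) (i : Fin 2) :
    pd i (fun q => c / q.1) p = if i = 0 then -c / p.1 ^ 2 else 0 := by
  simpa using pd_const_div_fst_pow hp c 1 i

lemma Ric_ΓB (C : Fin 2 → Fin 2 → Fin 2 → ℝ) {p : ℝ × ℝ} (hp : p.1 ≠ 0) (j k : Fin 2) :
    Ric (ΓB C) j k p = typeBRic C j k / p.1 ^ 2 := by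
  unfold Ric ΓB typeBRic
  simp only [Fin.sum_univ_two, pd_const_div_fst hp]
  split_ifs <;> simp_all <;> field_simp <;> ring

lemma nabRic_ΓB (C : Fin 2 → Fin 2 → Fin 2 → ℝ) {p : ℝ × ℝ} (hp : p.1 ≠ 0) (i j k : Fin 2) :
    nabRic (ΓB C) i j k p = typeBNabRic C i j k / p.1 ^ 3 := by
  unfold nabRic
  rw [pd_congr_of_eqOn (g := fun q => typeBRic C i j / q.1 ^ 2)
    (fun q hq => Ric_ΓB C hq i j) hp, pd_const_div_fst_pow hp]
  unfold typeBNabRic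
  simp only [Fin.sum_univ_two, Ric_ΓB C hp, ΓB]
  split_ifs <;> field_simp <;> ring

lemma nabRic_ΓB_eq_iff (C : Fin 2 → Fin 2 → Fin 2 → ℝ) (i j k i' j' k' : Fin 2) :
    (∀ p : ℝ × ℝ, 0 < p.1 → nabRic (ΓB C) i j k p = nabRic (ΓB C) i' j' k' p) ↔
      typeBNabRic C i j k = typeBNabRic C i' j' k' := by
  constructor
  · intro h
    simpa [nabRic_ΓB C (p := (1, 0)) one_ne_zero] using h (1, 0) one_pos
  · intro h p hp
    rw [nabRic_ΓB C hp.ne', nabRic_ΓB C hp.ne', h]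

section

variable {C : Fin 2 → Fin 2 → Fin 2 → ℝ}

lemma typeBRic_sub_typeBRic (hsym : ∀ i j k, C i j k = C j i k) :
    typeBRic C 0 1 - typeBRic C 1 0 = C 0 1 0 + C 1 1 1 := by
  simp only [typeBRic, Fin.sum_univ_two, hsym 1 0]
  norm_num
  ring

lemma typeBRic_comm (hsym : ∀ i j k, C i j k = C j i k)
    (hρsym : C 1 1 1 = - C 0 1 0) (j k : Fin 2) : typeBRic C j k = typeBRic C k j := by
  have h := typeBRic_sub_typeBRic hsym
  fin_cases j <;> fin_cases k <;> simp <;> linarith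

lemma typeBNabRic_comm (hR : ∀ j k, typeBRic C j k = typeBRic C k j) (i j k : Fin 2) :
    typeBNabRic C i j k = typeBNabRic C j i k := by
  have hsum : ∀ a b, ∑ l, C k a l * typeBRic C l b = ∑ l, C k a l * typeBRic C b l :=
    fun a b => Finset.sum_congr rfl fun l _ => by rw [hR l b]
  simp only [typeBNabRic, hR i j, hsum i j, hsum j i]
  ring

lemma typeBNabRic_010_sub_001 (hsym : ∀ i j k, C i j k = C j i k)
    (hρsym : C 1 1 1 = - C 0 1 0) :
    typeBNabRic C 0 1 0 - typeBNabRic C 0 0 1 =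
      C 0 0 0 * C 0 1 0 + 3 * C 0 0 1 * C 1 1 0 - 2 * C 0 1 0 * C 0 1 1 + 2 * C 0 1 0 := by
  simp only [typeBNabRic, typeBRic, Fin.sum_univ_two, hsym 1 0, hρsym]
  norm_num
  ring

lemma typeBNabRic_101_sub_110 (hsym : ∀ i j k, C i j k = C j i k)
    (hρsym : C 1 1 1 = - C 0 1 0) :
    typeBNabRic C 1 0 1 - typeBNabRic C 1 1 0 =
      2 * C 0 0 0 * C 1 1 0 - 6 * (C 0 1 0) ^ 2 - 4 * C 0 1 1 * C 1 1 0 - 2 * C 1 1 0 := by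
  simp only [typeBNabRic, typeBRic, Fin.sum_univ_two, hsym 1 0, hρsym]
  norm_num
  ring

end

lemma forall_fin_two_eq_swap_iff {α : Type*} (T : Fin 2 → Fin 2 → Fin 2 → α) :
    (∀ i j k, T i j k = T i k j) ↔ T 0 1 0 = T 0 0 1 ∧ T 1 0 1 = T 1 1 0 := by
  simp only [Fin.forall_fin_two, and_true, true_and]
  grind

/-- For a Type B connection with symmetric Ricci tensor (C₂₂² = −C₁₂¹), ∇ρ is
totally symmetric iff the two displayed polynomial equations hold. -/
theorem typeB_nablaRicci_totally_symmetric_iff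
    (C : Fin 2 → Fin 2 → Fin 2 → ℝ)
    (hsym : ∀ i j k, C i j k = C j i k)
    (hρsym : C 1 1 1 = - C 0 1 0) :
    (∀ i j k : Fin 2, ∀ p : ℝ × ℝ, 0 < p.1 →
        nabRic (ΓB C) i j k p = nabRic (ΓB C) j i k p ∧
        nabRic (ΓB C) i j k p = nabRic (ΓB C) i k j p)
      ↔ (C 0 0 0 * C 0 1 0 + 3 * C 0 0 1 * C 1 1 0
            - 2 * C 0 1 0 * C 0 1 1 + 2 * C 0 1 0 = 0 ∧
         2 * C 0 0 0 * C 1 1 0 - 6 * (C 0 1 0) ^ 2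
            - 4 * C 0 1 1 * C 1 1 0 - 2 * C 1 1 0 = 0) := by
  simp only [imp_and, forall_and, nabRic_ΓB_eq_iff]
  rw [and_iff_right (typeBNabRic_comm (typeBRic_comm hsym hρsym)),
    forall_fin_two_eq_swap_iff, ← sub_eq_zero, typeBNabRic_010_sub_001 hsym hρsym,
    ← sub_eq_zero (a := typeBNabRic C 1 0 1), typeBNabRic_101_sub_110 hsym hρsym]
end

section
/- Let ∇ be a strongly projectively flat affine surface (ρ symmetric, ∇ρ totally symmetric) whose Ricci tensor has rank 2 at every point, and let μ ∉ {0,−1}. Then every smooth solution f of H(f) = μ f ρ on a connected domain is identically zero. -/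
open Real

open Filter Topology

noncomputable def vv : Fin 2 → ℝ × ℝ := ![(1,0),(0,1)]

lemma diffAt_slice0 {A : ℝ × ℝ → ℝ} {p : ℝ × ℝ} (hA : DifferentiableAt ℝ A p) :
    DifferentiableAt ℝ (fun t => A (t, p.2)) p.1 := by
  have h2 : DifferentiableAt ℝ (fun t : ℝ => (t, p.2)) p.1 :=
    DifferentiableAt.prodMk differentiableAt_id (differentiableAt_const _)
  have hA' : DifferentiableAt ℝ A ((fun t : ℝ => (t, p.2)) p.1) := by
    simpa using hA
  simpa [Function.comp_def] using hA'.comp p.1 h2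

lemma diffAt_slice1 {A : ℝ × ℝ → ℝ} {p : ℝ × ℝ} (hA : DifferentiableAt ℝ A p) :
    DifferentiableAt ℝ (fun t => A (p.1, t)) p.2 := by
  have h2 : DifferentiableAt ℝ (fun t : ℝ => (p.1, t)) p.2 :=
    DifferentiableAt.prodMk (differentiableAt_const _) differentiableAt_id
  have hA' : DifferentiableAt ℝ A ((fun t : ℝ => (p.1, t)) p.2) := by
    simpa using hA
  simpa [Function.comp_def] using hA'.comp p.2 h2

lemma hasDerivAt_pd0 {A : ℝ × ℝ → ℝ} {p : ℝ × ℝ} (hA : DifferentiableAt ℝ A p) :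
    HasDerivAt (fun t => A (t, p.2)) (pd 0 A p) p.1 := by
  simpa [pd] using (diffAt_slice0 hA).hasDerivAt

lemma hasDerivAt_pd1 {A : ℝ × ℝ → ℝ} {p : ℝ × ℝ} (hA : DifferentiableAt ℝ A p) :
    HasDerivAt (fun t => A (p.1, t)) (pd 1 A p) p.2 := by
  simpa [pd] using (diffAt_slice1 hA).hasDerivAt

lemma pd_congr {f g : ℝ × ℝ → ℝ} {p : ℝ × ℝ} (h : f =ᶠ[𝓝 p] g) (i : Fin 2) :
    pd i f p = pd i g p := by
  have ht0 : Tendsto (fun t : ℝ => (t, p.2)) (𝓝 p.1) (𝓝 p) := by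
    rw [← Prod.mk.eta (p := p)]
    exact (continuous_id.prodMk continuous_const).tendsto p.1
  have ht1 : Tendsto (fun t : ℝ => (p.1, t)) (𝓝 p.2) (𝓝 p) := by
    rw [← Prod.mk.eta (p := p)]
    exact (continuous_const.prodMk continuous_id).tendsto p.2
  fin_cases i
  · simp only [pd, if_pos rfl]
    exact Filter.EventuallyEq.deriv_eq (h.comp_tendsto ht0)
  · simp only [pd]
    norm_num
    exact Filter.EventuallyEq.deriv_eq (h.comp_tendsto ht1)

lemma pd_eq_fderiv {f : ℝ × ℝ → ℝ} {p : ℝ × ℝ} (hf : DifferentiableAt ℝ f p) (i : Fin 2) :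
    pd i f p = fderiv ℝ f p (vv i) := by
  have hf' : HasFDerivAt f (fderiv ℝ f p) p := hf.hasFDerivAt
  fin_cases i
  · have hin : HasDerivAt (fun t : ℝ => (t, p.2)) ((1:ℝ), (0:ℝ)) p.1 :=
      (hasDerivAt_id p.1).prodMk (hasDerivAt_const p.1 p.2)
    have hf'' : HasFDerivAt f (fderiv ℝ f p) ((fun t : ℝ => (t, p.2)) p.1) := by simpa using hf'
    have := hf''.comp_hasDerivAt p.1 hin
    simp only [pd, if_pos rfl]
    simpa [vv, Function.comp_def] using this.deriv
  · have hin : HasDerivAt (fun t : ℝ => (p.1, t)) ((0:ℝ), (1:ℝ)) p.2 :=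
      (hasDerivAt_const p.2 p.1).prodMk (hasDerivAt_id p.2)
    have hf'' : HasFDerivAt f (fderiv ℝ f p) ((fun t : ℝ => (p.1, t)) p.2) := by simpa using hf'
    have := hf''.comp_hasDerivAt p.2 hin
    simp only [pd]
    norm_num
    simpa [vv, Function.comp_def] using this.deriv

lemma contDiffOn_pd {M : Set (ℝ × ℝ)} {f : ℝ × ℝ → ℝ} (hM : IsOpen M)
    (hf : ContDiffOn ℝ (⊤ : ℕ∞) f M) (i : Fin 2) : ContDiffOn ℝ (⊤ : ℕ∞) (pd i f) M := by
  have h1 : ContDiffOn ℝ (⊤ : ℕ∞) (fun q => fderiv ℝ f q (vv i)) M :=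
    (hf.fderiv_of_isOpen hM (by simp)).clm_apply contDiffOn_const
  exact h1.congr fun q hq =>
    pd_eq_fderiv ((hf.contDiffAt (hM.mem_nhds hq)).differentiableAt (by simp)) i

lemma diffAt_of_contDiffOn {M : Set (ℝ × ℝ)} {f : ℝ × ℝ → ℝ} (hM : IsOpen M)
    (hf : ContDiffOn ℝ (⊤ : ℕ∞) f M) {p : ℝ × ℝ} (hp : p ∈ M) : DifferentiableAt ℝ f p :=
  (hf.contDiffAt (hM.mem_nhds hp)).differentiableAt (by simp)

lemma pd_comm {M : Set (ℝ × ℝ)} {f : ℝ × ℝ → ℝ} (hM : IsOpen M)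
    (hf : ContDiffOn ℝ (⊤ : ℕ∞) f M) {p : ℝ × ℝ} (hp : p ∈ M) (i j : Fin 2) :
    pd i (pd j f) p = pd j (pd i f) p := by
  have hsym : IsSymmSndFDerivAt ℝ f p :=
    (hf.contDiffAt (hM.mem_nhds hp)).isSymmSndFDerivAt (by rw [minSmoothness_of_isRCLikeNormedField]; exact WithTop.coe_le_coe.2 (le_top : (2:ℕ∞) ≤ ⊤))
  have hev : ∀ k : Fin 2, pd k f =ᶠ[𝓝 p] fun q => fderiv ℝ f q (vv k) := by
    intro k
    filter_upwards [hM.mem_nhds hp] with q hq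
    exact pd_eq_fderiv (diffAt_of_contDiffOn hM hf hq) k
  have hD : ∀ k : Fin 2, DifferentiableAt ℝ (fun q => fderiv ℝ f q (vv k)) p := by
    intro k
    exact diffAt_of_contDiffOn hM
      ((hf.fderiv_of_isOpen hM (by simp)).clm_apply contDiffOn_const) hp
  have hDf : DifferentiableAt ℝ (fderiv ℝ f) p :=
    (((hf.fderiv_of_isOpen hM (m := (⊤ : ℕ∞)) (by simp)).contDiffAt
      (hM.mem_nhds hp))).differentiableAt (by simp)
  have key : ∀ k m : Fin 2, pd k (pd m f) p = fderiv ℝ (fderiv ℝ f) p (vv k) (vv m) := by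
    intro k m
    rw [pd_congr (hev m) k, pd_eq_fderiv (hD m) k]
    have := fderiv_clm_apply (𝕜 := ℝ) hDf (differentiableAt_const (vv m))
    rw [this]
    simp
  rw [key i j, key j i, hsym (vv i) (vv j)]

lemma pd_sub_expand {A B C D E : ℝ × ℝ → ℝ} {p : ℝ × ℝ}
    (hA : DifferentiableAt ℝ A p) (hB : DifferentiableAt ℝ B p)
    (hC : DifferentiableAt ℝ C p) (hD : DifferentiableAt ℝ D p)
    (hE : DifferentiableAt ℝ E p) (a : Fin 2) :
    pd a (fun q => A q - (B q * C q + D q * E q)) p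
      = pd a A p - (pd a B p * C p + B p * pd a C p + (pd a D p * E p + D p * pd a E p)) := by
  fin_cases a
  · have h := (hasDerivAt_pd0 hA).sub
      (((hasDerivAt_pd0 hB).mul (hasDerivAt_pd0 hC)).add
        ((hasDerivAt_pd0 hD).mul (hasDerivAt_pd0 hE)))
    have := h.deriv
    simp only [pd, if_pos rfl]
    exact this
  · have h := (hasDerivAt_pd1 hA).sub
      (((hasDerivAt_pd1 hB).mul (hasDerivAt_pd1 hC)).add
        ((hasDerivAt_pd1 hD).mul (hasDerivAt_pd1 hE)))
    have := h.deriv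
    simp only [pd]
    norm_num
    exact this

lemma pd_const_mul_mul {f R : ℝ × ℝ → ℝ} {p : ℝ × ℝ} (μ : ℝ)
    (hf : DifferentiableAt ℝ f p) (hR : DifferentiableAt ℝ R p) (a : Fin 2) :
    pd a (fun q => μ * f q * R q) p = μ * pd a f p * R p + μ * f p * pd a R p := by
  fin_cases a
  · have h := ((hasDerivAt_pd0 hf).const_mul μ).mul (hasDerivAt_pd0 hR)
    have := h.deriv
    simp only [pd, if_pos rfl]
    simpa [mul_assoc, pd, Pi.mul_def] using this
  · have h := ((hasDerivAt_pd1 hf).const_mul μ).mul (hasDerivAt_pd1 hR)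
    have := h.deriv
    simp only [pd]
    norm_num
    simpa [mul_assoc, pd, Pi.mul_def] using this

lemma pd_zero_fun {p : ℝ × ℝ} (a : Fin 2) : pd a (fun _ => (0:ℝ)) p = 0 := by
  fin_cases a <;> simp [pd]

lemma contDiffOn_Ric {M : Set (ℝ × ℝ)} (hM : IsOpen M)
    (Γ : Fin 2 → Fin 2 → Fin 2 → (ℝ × ℝ → ℝ))
    (hΓsm : ∀ i j k, ContDiffOn ℝ (⊤ : ℕ∞) (Γ i j k) M) (j k : Fin 2) :
    ContDiffOn ℝ (⊤ : ℕ∞) (Ric Γ j k) M := by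
  have hexp : Ric Γ j k = fun p =>
      (pd 0 (Γ j k 0) p + pd 1 (Γ j k 1) p) - (pd j (Γ 0 k 0) p + pd j (Γ 1 k 1) p)
      + ((Γ 0 0 0 p * Γ j k 0 p + Γ 0 1 0 p * Γ j k 1 p)
        + (Γ 1 0 1 p * Γ j k 0 p + Γ 1 1 1 p * Γ j k 1 p))
      - ((Γ j 0 0 p * Γ 0 k 0 p + Γ j 1 0 p * Γ 0 k 1 p)
        + (Γ j 0 1 p * Γ 1 k 0 p + Γ j 1 1 p * Γ 1 k 1 p)) := by
    funext p; simp only [Ric, Fin.sum_univ_two]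
  rw [hexp]
  exact (((((contDiffOn_pd hM (hΓsm j k 0) 0).add (contDiffOn_pd hM (hΓsm j k 1) 1)).sub
    ((contDiffOn_pd hM (hΓsm 0 k 0) j).add (contDiffOn_pd hM (hΓsm 1 k 1) j))).add
    ((((hΓsm 0 0 0).mul (hΓsm j k 0)).add ((hΓsm 0 1 0).mul (hΓsm j k 1))).add
      (((hΓsm 1 0 1).mul (hΓsm j k 0)).add ((hΓsm 1 1 1).mul (hΓsm j k 1))))).sub
    ((((hΓsm j 0 0).mul (hΓsm 0 k 0)).add ((hΓsm j 1 0).mul (hΓsm 0 k 1))).add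
      (((hΓsm j 0 1).mul (hΓsm 1 k 0)).add ((hΓsm j 1 1).mul (hΓsm 1 k 1)))))

/-- On a connected strongly projectively flat affine surface whose Ricci tensor
has rank 2 everywhere, and μ ∉ {0,−1}, every solution of H(f) = μ f ρ vanishes. -/
theorem stronglyProjFlat_rank2_trivial_solution
    (M : Set (ℝ × ℝ)) (hM : IsOpen M) (hMc : IsConnected M)
    (Γ : Fin 2 → Fin 2 → Fin 2 → (ℝ × ℝ → ℝ))
    (hΓ : ∀ i j k, Γ i j k = Γ j i k)
    (hΓsm : ∀ i j k, ContDiffOn ℝ (⊤ : ℕ∞) (Γ i j k) M)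
    (hρsym : ∀ i j : Fin 2, ∀ p ∈ M, Ric Γ i j p = Ric Γ j i p)
    (htot : ∀ i j k : Fin 2, ∀ p ∈ M,
      nabRic Γ i j k p = nabRic Γ j i k p ∧
      nabRic Γ i j k p = nabRic Γ i k j p)
    (hrank : ∀ p ∈ M,
      Ric Γ 0 0 p * Ric Γ 1 1 p - Ric Γ 0 1 p * Ric Γ 1 0 p ≠ 0)
    (μ : ℝ) (hμ0 : μ ≠ 0) (hμ1 : μ ≠ -1)
    (f : ℝ × ℝ → ℝ) (hf : ContDiffOn ℝ (⊤ : ℕ∞) f M)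
    (hQE : ∀ i j : Fin 2, ∀ p ∈ M, Hess Γ f i j p = μ * f p * Ric Γ i j p) :
    ∀ p ∈ M, f p = 0 := by
  have hfd : ∀ q ∈ M, DifferentiableAt ℝ f q := fun q hq => diffAt_of_contDiffOn hM hf hq
  have hΓd : ∀ i j k, ∀ q ∈ M, DifferentiableAt ℝ (Γ i j k) q :=
    fun i j k q hq => diffAt_of_contDiffOn hM (hΓsm i j k) hq
  have hpdfsm : ∀ l : Fin 2, ContDiffOn ℝ (⊤ : ℕ∞) (pd l f) M := fun l => contDiffOn_pd hM hf l
  have hRicsm : ∀ i j, ContDiffOn ℝ (⊤ : ℕ∞) (Ric Γ i j) M := contDiffOn_Ric hM Γ hΓsm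
  have key : ∀ p ∈ M, ∀ c : Fin 2,
      (μ + 1) * (Ric Γ 1 c p * pd 0 f p - Ric Γ 0 c p * pd 1 f p) = 0 := by
    intro p hp c
    have dpdf : ∀ l : Fin 2, DifferentiableAt ℝ (pd l f) p :=
      fun l => diffAt_of_contDiffOn hM (hpdfsm l) hp
    have dpdpdf : ∀ b : Fin 2, DifferentiableAt ℝ (pd b (pd c f)) p :=
      fun b => diffAt_of_contDiffOn hM (contDiffOn_pd hM (hpdfsm c) b) hp
    have dRic : ∀ i j : Fin 2, DifferentiableAt ℝ (Ric Γ i j) p :=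
      fun i j => diffAt_of_contDiffOn hM (hRicsm i j) hp
    have hA : ∀ a b : Fin 2, pd a (Hess Γ f b c) p
        = pd a (pd b (pd c f)) p - (pd a (Γ b c 0) p * pd 0 f p + Γ b c 0 p * pd a (pd 0 f) p
          + (pd a (Γ b c 1) p * pd 1 f p + Γ b c 1 p * pd a (pd 1 f) p)) := by
      intro a b
      have h1 : Hess Γ f b c
          = fun q => pd b (pd c f) q - (Γ b c 0 q * pd 0 f q + Γ b c 1 q * pd 1 f q) := by
        funext q; simp [Hess, Fin.sum_univ_two]
      rw [h1, pd_sub_expand (dpdpdf b) (hΓd b c 0 p hp) (dpdf 0) (hΓd b c 1 p hp) (dpdf 1) a]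
    have hB : ∀ a b : Fin 2, pd a (Hess Γ f b c) p
        = μ * pd a f p * Ric Γ b c p + μ * f p * pd a (Ric Γ b c) p := by
      intro a b
      have hev : Hess Γ f b c =ᶠ[𝓝 p] fun q => μ * f q * Ric Γ b c q := by
        filter_upwards [hM.mem_nhds hp] with q hq using hQE b c q hq
      rw [pd_congr hev a, pd_const_mul_mul μ (hfd p hp) (dRic b c) a]
    have eq0 := (hA 0 1).symm.trans (hB 0 1)
    have eq1 := (hA 1 0).symm.trans (hB 1 0)
    have hCl : pd 0 (pd 1 (pd c f)) p = pd 1 (pd 0 (pd c f)) p :=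
      pd_comm hM (hpdfsm c) hp 0 1
    have hDl : ∀ a b : Fin 2, pd a (Ric Γ b c) p = nabRic Γ b c a p
        + (Γ a b 0 p * Ric Γ 0 c p + Γ a b 1 p * Ric Γ 1 c p)
        + (Γ a c 0 p * Ric Γ b 0 p + Γ a c 1 p * Ric Γ b 1 p) := by
      intro a b; simp only [nabRic, Fin.sum_univ_two]; ring
    have hD0 := hDl 0 1
    have hD1 := hDl 1 0
    have hN : nabRic Γ 1 c 0 p = nabRic Γ 0 c 1 p := by
      rw [(htot 1 c 0 p hp).1, (htot c 1 0 p hp).2, (htot c 0 1 p hp).1]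
    have hQ : ∀ a l : Fin 2, pd a (pd l f) p
        = Γ a l 0 p * pd 0 f p + Γ a l 1 p * pd 1 f p + μ * f p * Ric Γ a l p := by
      intro a l
      have h := hQE a l p hp
      simp only [Hess, Fin.sum_univ_two] at h
      linear_combination h
    have hg0 : Γ 0 1 0 p = Γ 1 0 0 p := by rw [hΓ 0 1 0]
    have hg1 : Γ 0 1 1 p = Γ 1 0 1 p := by rw [hΓ 0 1 1]
    have hR1c : Ric Γ 1 c p = pd 0 (Γ 1 c 0) p - pd 1 (Γ 0 c 0) p
        + (Γ 0 0 0 p * Γ 1 c 0 p + Γ 0 1 0 p * Γ 1 c 1 p)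
        - (Γ 1 0 0 p * Γ 0 c 0 p + Γ 1 1 0 p * Γ 0 c 1 p) := by
      simp only [Ric, Fin.sum_univ_two]; ring
    have hR0c : Ric Γ 0 c p = pd 1 (Γ 0 c 1) p - pd 0 (Γ 1 c 1) p
        + (Γ 1 0 1 p * Γ 0 c 0 p + Γ 1 1 1 p * Γ 0 c 1 p)
        - (Γ 0 0 1 p * Γ 1 c 0 p + Γ 0 1 1 p * Γ 1 c 1 p) := by
      simp only [Ric, Fin.sum_univ_two]; ring
    linear_combination (eq1 - eq0) + hCl - Γ 1 c 0 p * hQ 0 0 - Γ 1 c 1 p * hQ 0 1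
      + Γ 0 c 0 p * hQ 1 0 + Γ 0 c 1 p * hQ 1 1
      - μ * f p * (hD0 - hD1) - μ * f p * hN
      - μ * f p * Ric Γ 0 c p * hg0 - μ * f p * Ric Γ 1 c p * hg1
      + pd 0 f p * hR1c - pd 1 f p * hR0c
  have grad : ∀ p ∈ M, ∀ l : Fin 2, pd l f p = 0 := by
    intro p hp l
    have hμ1' : μ + 1 ≠ 0 := fun h => hμ1 (by linarith)
    have e0 : Ric Γ 1 0 p * pd 0 f p - Ric Γ 0 0 p * pd 1 f p = 0 :=
      (mul_eq_zero.mp (key p hp 0)).resolve_left hμ1'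
    have e1 : Ric Γ 1 1 p * pd 0 f p - Ric Γ 0 1 p * pd 1 f p = 0 :=
      (mul_eq_zero.mp (key p hp 1)).resolve_left hμ1'
    have hdet := hrank p hp
    fin_cases l
    · have h : (Ric Γ 0 0 p * Ric Γ 1 1 p - Ric Γ 0 1 p * Ric Γ 1 0 p) * pd 0 f p = 0 := by
        linear_combination Ric Γ 0 0 p * e1 - Ric Γ 0 1 p * e0
      exact (mul_eq_zero.mp h).resolve_left hdet
    · have h : (Ric Γ 0 0 p * Ric Γ 1 1 p - Ric Γ 0 1 p * Ric Γ 1 0 p) * pd 1 f p = 0 := by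
        linear_combination Ric Γ 1 0 p * e1 - Ric Γ 1 1 p * e0
      exact (mul_eq_zero.mp h).resolve_left hdet
  intro p hp
  have hzero : ∀ i j : Fin 2, pd i (pd j f) p = 0 := by
    intro i j
    have hev : pd j f =ᶠ[𝓝 p] (fun _ => (0:ℝ)) := by
      filter_upwards [hM.mem_nhds hp] with q hq using grad q hq j
    rw [pd_congr hev i, pd_zero_fun]
  by_contra hfp
  have hz : ∀ i j : Fin 2, Ric Γ i j p = 0 := by
    intro i j
    have h := hQE i j p hp
    have hH : Hess Γ f i j p = 0 := by
      simp [Hess, Fin.sum_univ_two, hzero i j, grad p hp 0, grad p hp 1]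
    rw [hH] at h
    rcases mul_eq_zero.mp h.symm with h2 | h2
    · rcases mul_eq_zero.mp h2 with h3 | h3
      · exact absurd h3 hμ0
      · exact absurd h3 hfp
    · exact h2
  exact hrank p hp (by rw [hz 0 0, hz 0 1]; ring)
end
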